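/- Let G(ξ) = (4π)^{-3/2} e^{-|ξ|²/4}, f_i(ξ) = ½(e_i × ξ)G(ξ), and g_i = curl f_i. Then g_i(ξ) = (G(ξ)/4)((4−|ξ|²)e_i + ξ_i ξ), and Λ g_i = −(3/2) g_i where Λ = Δ + ½ξ·∇ + 1. -/

import Mathlib

open Real MeasureTheory

/-- Partial derivative in the `i`-th coordinate direction. -/
noncomputable def pd (i : Fin 3) (f : (Fin 3 → ℝ) → ℝ) (x : Fin 3 → ℝ) : ℝ :=
  fderiv ℝ f x (Pi.single i 1)

/-- The curl of a vector field on `ℝ³`. -/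
noncomputable def curl3 (v : (Fin 3 → ℝ) → (Fin 3 → ℝ)) (x : Fin 3 → ℝ) : Fin 3 → ℝ :=
  ![pd 1 (fun y => v y 2) x - pd 2 (fun y => v y 1) x,
    pd 2 (fun y => v y 0) x - pd 0 (fun y => v y 2) x,
    pd 0 (fun y => v y 1) x - pd 1 (fun y => v y 0) x]

/-- The divergence of a vector field on `ℝ³`. -/
noncomputable def div3 (v : (Fin 3 → ℝ) → (Fin 3 → ℝ)) (x : Fin 3 → ℝ) : ℝ :=
  ∑ i, pd i (fun y => v y i) x

/-- The cross product on `ℝ³`. -/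
def cross3 (a b : Fin 3 → ℝ) : Fin 3 → ℝ :=
  ![a 1 * b 2 - a 2 * b 1, a 2 * b 0 - a 0 * b 2, a 0 * b 1 - a 1 * b 0]

/-- The Gaussian `G(ξ) = (4π)^{-3/2} exp(-|ξ|²/4)`. -/
noncomputable def G3 (ξ : Fin 3 → ℝ) : ℝ :=
  (4 * π) ^ (-(3 : ℝ) / 2) * Real.exp (-(∑ i, ξ i ^ 2) / 4)

/-- `p_i(ξ) = ½ (e_i × ξ)`. -/
noncomputable def pvec (i : Fin 3) (ξ : Fin 3 → ℝ) : Fin 3 → ℝ :=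
  (1 / 2 : ℝ) • cross3 (Pi.single i 1) ξ

/-- `f_i = p_i G`. -/
noncomputable def fvec (i : Fin 3) (ξ : Fin 3 → ℝ) : Fin 3 → ℝ := G3 ξ • pvec i ξ

/-- The Laplacian of a scalar function on `ℝ³`. -/
noncomputable def lap3 (f : (Fin 3 → ℝ) → ℝ) (x : Fin 3 → ℝ) : ℝ :=
  ∑ i, pd i (pd i f) x

/-- The operator `Λ = Δ + ½ ξ·∇ + 1` acting on scalar functions. -/
noncomputable def Lam (f : (Fin 3 → ℝ) → ℝ) (x : Fin 3 → ℝ) : ℝ :=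
  lap3 f x + (1 / 2) * ∑ j, x j * pd j f x + f x

/-- The formal adjoint `Λ* = Δ − ½ ξ·∇ − ½` acting on scalar functions. -/
noncomputable def LamStar (f : (Fin 3 → ℝ) → ℝ) (x : Fin 3 → ℝ) : ℝ :=
  lap3 f x - (1 / 2) * ∑ j, x j * pd j f x - (1 / 2) * f x

/-!
Write `f_i = G p_i` with `p_i = ½ e_i × ξ`. The product rule for the curl gives
`curl f_i = G curl p_i + ∇G × p_i = G e_i − (G/4) ξ × (e_i × ξ)`, and the BAC–CAB rule turns this
into the stated formula for `g_i`. Each component of `g_i` is `G q` with `q` a quadratic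
polynomial. Since `∇G = −(ξ/2) G`, conjugation by the Gaussian turns `Λ` into its adjoint,
`Λ (G q) = G Λ* q`, and `Λ* q = −(3/2) q` is a direct computation on quadratic polynomials.
-/

open Matrix

section PartialDerivatives

variable {f g : (Fin 3 → ℝ) → ℝ} {j : Fin 3}

lemma pd_add (hf : Differentiable ℝ f) (hg : Differentiable ℝ g) :
    pd j (fun y => f y + g y) = fun x => pd j f x + pd j g x := by
  funext x; simp [pd, fderiv_fun_add (hf x) (hg x)]

lemma pd_sub (hf : Differentiable ℝ f) (hg : Differentiable ℝ g) :
    pd j (fun y => f y - g y) = fun x => pd j f x - pd j g x := by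
  funext x; simp [pd, fderiv_fun_sub (hf x) (hg x)]

lemma pd_mul (hf : Differentiable ℝ f) (hg : Differentiable ℝ g) :
    pd j (fun y => f y * g y) = fun x => f x * pd j g x + g x * pd j f x := by
  funext x; simp [pd, fderiv_fun_mul (hf x) (hg x)]

lemma pd_const_mul (hf : Differentiable ℝ f) (c : ℝ) :
    pd j (fun y => c * f y) = fun x => c * pd j f x := by
  funext x; simp [pd, fderiv_const_mul (hf x)]

lemma pd_exp (hf : Differentiable ℝ f) :
    pd j (fun y => Real.exp (f y)) = fun x => Real.exp (f x) * pd j f x := by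
  funext x; simp [pd, ((hf x).hasFDerivAt.exp).fderiv]

lemma pd_sum {s : Finset (Fin 3)} {F : Fin 3 → (Fin 3 → ℝ) → ℝ}
    (hF : ∀ m, Differentiable ℝ (F m)) :
    pd j (fun y => ∑ m ∈ s, F m y) = fun x => ∑ m ∈ s, pd j (F m) x := by
  funext x; simp [pd, fderiv_fun_sum (fun m _ => hF m x)]

lemma pd_const (c : ℝ) : pd j (fun _ => c) = fun _ => 0 := by
  funext x; simp [pd]

lemma pd_coord (m : Fin 3) :
    pd j (fun y : Fin 3 → ℝ => y m) = fun _ => if m = j then 1 else 0 := by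
  funext x
  simp [pd, fderiv_apply, Pi.single_apply]

lemma pd_div_const (hf : Differentiable ℝ f) (c : ℝ) :
    pd j (fun y => f y / c) = fun x => pd j f x / c := by
  simp only [div_eq_inv_mul, pd_const_mul hf]

lemma pd_sq (hf : Differentiable ℝ f) :
    pd j (fun y => f y ^ 2) = fun x => 2 * f x * pd j f x := by
  simp only [sq, pd_mul hf hf]; funext x; ring

lemma pd_sum_sq (j : Fin 3) :
    pd j (fun y : Fin 3 → ℝ => ∑ m, y m ^ 2) = fun x => 2 * x j := by
  rw [pd_sum (fun m => by fun_prop)]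
  funext x
  simp [pd_sq (differentiable_apply _), pd_coord]

lemma ContDiff.differentiable_pd (hf : ContDiff ℝ 2 f) (j : Fin 3) :
    Differentiable ℝ (pd j f) :=
  ((hf.fderiv_right (m := 1) (by norm_num)).differentiable one_ne_zero).clm_apply
    (differentiable_const _)

lemma lap3_mul (hf : ContDiff ℝ 2 f) (hg : ContDiff ℝ 2 g) (x : Fin 3 → ℝ) :
    lap3 (fun y => f y * g y) x
      = f x * lap3 g x + 2 * ∑ j, pd j f x * pd j g x + g x * lap3 f x := by
  have hf1 := hf.differentiable (by norm_num)
  have hg1 := hg.differentiable (by norm_num)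
  simp only [lap3, Finset.mul_sum, ← Finset.sum_add_distrib]
  refine Finset.sum_congr rfl fun j _ => ?_
  have hf2 := hf.differentiable_pd j
  have hg2 := hg.differentiable_pd j
  rw [pd_mul hf1 hg1, pd_add (by fun_prop) (by fun_prop), pd_mul hf1 hg2, pd_mul hg1 hf2]
  ring

end PartialDerivatives

lemma contDiff_G3 : ContDiff ℝ 2 G3 := by
  unfold G3; fun_prop

lemma pd_G3 (j : Fin 3) : pd j G3 = fun x => -(x j / 2) * G3 x := by
  have hexponent : pd j (fun y : Fin 3 → ℝ => -(∑ m, y m ^ 2) / 4) = fun x => -(x j / 2) := by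
    simp only [neg_div, div_eq_inv_mul (∑ m, _), ← neg_mul]
    rw [pd_const_mul (by fun_prop), pd_sum_sq]
    funext x; ring
  unfold G3
  rw [pd_const_mul (by fun_prop), pd_exp (by fun_prop), hexponent]
  funext x; ring

lemma lap3_G3 (x : Fin 3 → ℝ) : lap3 G3 x = ((∑ m, x m ^ 2) / 4 - 3 / 2) * G3 x := by
  have hsecond (m : Fin 3) : pd m (pd m G3) x = (x m ^ 2 / 4 - 1 / 2) * G3 x := by
    have hlin : (fun y : Fin 3 → ℝ => -(y m / 2)) = fun y => -(1 / 2) * y m := by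
      funext y; ring
    rw [pd_G3, pd_mul (by fun_prop) (contDiff_G3.differentiable (by norm_num)), pd_G3, hlin,
      pd_const_mul (by fun_prop), pd_coord]
    simp only [if_true]
    ring
  simp only [lap3, hsecond, ← Finset.sum_mul, Finset.sum_sub_distrib, ← Finset.sum_div,
    Finset.sum_const, Finset.card_univ, Fintype.card_fin, nsmul_eq_mul]
  ring

lemma Lam_G3_mul {q : (Fin 3 → ℝ) → ℝ} (hq : ContDiff ℝ 2 q) (x : Fin 3 → ℝ) :
    Lam (fun y => G3 y * q y) x = G3 x * LamStar q x := by
  simp only [Lam, LamStar, lap3_mul contDiff_G3 hq, lap3_G3,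
    pd_mul (contDiff_G3.differentiable (by norm_num)) (hq.differentiable (by norm_num)), pd_G3,
    Fin.sum_univ_three]
  ring

noncomputable def gPoly (i k : Fin 3) (y : Fin 3 → ℝ) : ℝ :=
  ((4 - ∑ m, y m ^ 2) * (Pi.single i 1 : Fin 3 → ℝ) k + y i * y k) / 4

lemma pd_gPoly (i k j : Fin 3) :
    pd j (gPoly i k) = fun x =>
      (-2 * x j * (Pi.single i 1 : Fin 3 → ℝ) k
        + (if i = j then 1 else 0) * x k + x i * (if k = j then 1 else 0)) / 4 := by
  unfold gPoly
  simp (disch := fun_prop) only [pd_div_const, pd_add, pd_sub, pd_mul, pd_const, pd_sum_sq,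
    pd_coord]
  funext x; ring

lemma LamStar_gPoly (i k : Fin 3) (x : Fin 3 → ℝ) :
    LamStar (gPoly i k) x = -(3 / 2) * gPoly i k x := by
  simp (disch := fun_prop) only [LamStar, lap3, pd_gPoly, pd_div_const, pd_add, pd_mul, pd_const,
    pd_coord]
  fin_cases i <;> fin_cases k <;> simp [Fin.sum_univ_three, gPoly] <;> ring

lemma contDiff_gPoly (i k : Fin 3) : ContDiff ℝ 2 (gPoly i k) := by
  unfold gPoly; fun_prop

noncomputable def grad3 (φ : (Fin 3 → ℝ) → ℝ) (x : Fin 3 → ℝ) : Fin 3 → ℝ :=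
  fun j => pd j φ x

lemma grad3_G3 (x : Fin 3 → ℝ) : grad3 G3 x = -(G3 x / 2) • x := by
  ext j; simp only [grad3, pd_G3, Pi.smul_apply, smul_eq_mul]; ring

lemma curl3_smul {φ : (Fin 3 → ℝ) → ℝ} {v : (Fin 3 → ℝ) → (Fin 3 → ℝ)}
    (hφ : Differentiable ℝ φ) (hv : Differentiable ℝ v) (x : Fin 3 → ℝ) :
    curl3 (fun y => φ y • v y) x = φ x • curl3 v x + grad3 φ x ⨯₃ v x := by
  have hcomp (m : Fin 3) : Differentiable ℝ fun y => v y m := by fun_prop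
  ext k
  fin_cases k <;>
  · simp [curl3, grad3, cross_apply, pd_mul hφ (hcomp _)]
    ring

lemma curl3_half_cross (a x : Fin 3 → ℝ) :
    curl3 (fun y => (1 / 2 : ℝ) • a ⨯₃ y) x = a := by
  ext k
  fin_cases k <;>
  · simp (disch := fun_prop) [curl3, cross_apply, pd_const_mul, pd_sub, pd_coord]
    ring

lemma pvec_eq (i : Fin 3) : pvec i = fun y => (1 / 2 : ℝ) • Pi.single i 1 ⨯₃ y := rfl

lemma differentiable_pvec (i : Fin 3) : Differentiable ℝ (pvec i) :=
  (crossProduct (Pi.single i 1 : Fin 3 → ℝ)).toContinuousLinearMap.differentiable.const_smul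
    (1 / 2 : ℝ)

lemma curl3_fvec (i : Fin 3) (x : Fin 3 → ℝ) :
    curl3 (fvec i) x =
      (G3 x / 4) • ((4 - ∑ k, x k ^ 2) • (Pi.single i 1 : Fin 3 → ℝ) + x i • x) := by
  rw [show fvec i = fun y => G3 y • pvec i y from rfl,
    curl3_smul (contDiff_G3.differentiable (by norm_num)) (differentiable_pvec i), pvec_eq,
    curl3_half_cross, grad3_G3]
  simp only [map_smul, LinearMap.smul_apply, cross_cross_eq_smul_sub_smul',
    single_one_dotProduct]
  simp only [dotProduct, ← sq]
  module

lemma curl3_fvec_apply (i k : Fin 3) (x : Fin 3 → ℝ) :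
    curl3 (fvec i) x k = G3 x * gPoly i k x := by
  rw [curl3_fvec, gPoly]
  simp only [Pi.smul_apply, Pi.add_apply, smul_eq_mul]
  ring

theorem stmt12 (i : Fin 3) (ξ : Fin 3 → ℝ) :
    curl3 (fvec i) ξ =
      (G3 ξ / 4) • ((4 - ∑ k, ξ k ^ 2) • (Pi.single i 1 : Fin 3 → ℝ) + ξ i • ξ) ∧
    (∀ k : Fin 3, Lam (fun y => curl3 (fvec i) y k) ξ = -(3 / 2) * curl3 (fvec i) ξ k) := by
  refine ⟨curl3_fvec i ξ, fun k => ?_⟩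
  simp only [curl3_fvec_apply, Lam_G3_mul (contDiff_gPoly i k), LamStar_gPoly]
  ring
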